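/- Zlotnik's inequality. Suppose the function y satisfies y'(t) = g(y(t)) + b'(t) on [0,T], y(0) = y⁰, with g ∈ C(ℝ) and y, b ∈ W^{1,1}(0,T). If g(ξ) → −∞ as ξ → ∞ and b(t₂) − b(t₁) ≤ N₀ + N₁(t₂ − t₁) for all 0 ≤ t₁ < t₂ ≤ T with some constants N₀ ≥ 0 and N₁ ≥ 0, then y(t) ≤ max{y⁰, ξ₀} + N₀ < ∞ on [0,T], where ξ₀ is any constant such that g(ξ) ≤ −N₁ for all ξ ≥ ξ₀. -/
import Mathlib


noncomputable section

open MeasureTheory Real Set Filter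
open scoped RealInnerProductSpace Topology

/-- Euclidean 3-space. -/
abbrev E3 : Type := EuclideanSpace ℝ (Fin 3)

/-- Standard basis vector. -/
noncomputable def e3 (i : Fin 3) : E3 := EuclideanSpace.single i 1

/-- Build a vector in `E3` from its components. -/
noncomputable def vec3 (f : Fin 3 → ℝ) : E3 := (WithLp.equiv 2 (Fin 3 → ℝ)).symm f

/-- Partial derivative `∂_j f` at `x`. -/
noncomputable def pd {F : Type*} [NormedAddCommGroup F] [NormedSpace ℝ F]
    (f : E3 → F) (j : Fin 3) (x : E3) : F := fderiv ℝ f x (e3 j)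

/-- Divergence of a vector field. -/
noncomputable def div3 (u : E3 → E3) (x : E3) : ℝ := ∑ i : Fin 3, pd u i x i

/-- Curl of a vector field. -/
noncomputable def curl3 (u : E3 → E3) (x : E3) : E3 :=
  vec3 ![pd u 1 x 2 - pd u 2 x 1, pd u 2 x 0 - pd u 0 x 2, pd u 0 x 1 - pd u 1 x 0]

/-- Cross product on `E3`. -/
noncomputable def cross3 (v w : E3) : E3 :=
  vec3 ![v 1 * w 2 - v 2 * w 1, v 2 * w 0 - v 0 * w 2, v 0 * w 1 - v 1 * w 0]

/-- Laplacian. -/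
noncomputable def lap3 {F : Type*} [NormedAddCommGroup F] [NormedSpace ℝ F]
    (f : E3 → F) (x : E3) : F :=
  ∑ i : Fin 3, iteratedFDeriv ℝ 2 f x ![e3 i, e3 i]

/-- `|∇d|²` (Frobenius square of the gradient). -/
noncomputable def gradSq (d : E3 → E3) (x : E3) : ℝ :=
  ∑ j : Fin 3, ∑ k : Fin 3, (pd d j x k) ^ 2

/-- The vector `Δd·∇d`, with components `∑ₖ ∂ᵢdᵏ (Δd)ᵏ`. -/
noncomputable def lapDotGrad (d : E3 → E3) (x : E3) : E3 :=
  vec3 fun i => ∑ k : Fin 3, pd d i x k * lap3 d x k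

/-- Time derivative `f_t`. -/
noncomputable def tD {F : Type*} [NormedAddCommGroup F] [NormedSpace ℝ F]
    (f : ℝ → E3 → F) (t : ℝ) (x : E3) : F := deriv (fun s => f s x) t

/-- Material derivative `ḟ = f_t + u·∇f`. -/
noncomputable def matD {F : Type*} [NormedAddCommGroup F] [NormedSpace ℝ F]
    (u : ℝ → E3 → E3) (f : ℝ → E3 → F) (t : ℝ) (x : E3) : F :=
  tD f t x + fderiv ℝ (f t) x (u t x)

/-- `L^p` norm over `Ω` (for a real exponent `p`). -/
noncomputable def LpN (Ω : Set E3) (p : ℝ) {F : Type*} [NormedAddCommGroup F]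
    (f : E3 → F) : ℝ := (∫ x in Ω, ‖f x‖ ^ p) ^ (1 / p)

/-- `L^∞` norm over `Ω`. -/
noncomputable def LinfN (Ω : Set E3) {F : Type*} [NormedAddCommGroup F]
    (f : E3 → F) : ℝ := ⨆ x ∈ Ω, ‖f x‖

/-- `L^p` norm of the `k`-th derivative over `Ω`. -/
noncomputable def DkLpN (Ω : Set E3) (p : ℝ) (k : ℕ) {F : Type*} [NormedAddCommGroup F]
    [NormedSpace ℝ F] (f : E3 → F) : ℝ :=
  LpN Ω p (fun x => ‖iteratedFDeriv ℝ k f x‖)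

/-- `W^{k,p}` norm over `Ω`. -/
noncomputable def WkpN (Ω : Set E3) (p : ℝ) (k : ℕ) {F : Type*} [NormedAddCommGroup F]
    [NormedSpace ℝ F] (f : E3 → F) : ℝ :=
  ∑ j ∈ Finset.range (k + 1), DkLpN Ω p j f

/-- Membership in `W^{k,p}(Ω)` (for classical representatives). -/
def MemWkp (Ω : Set E3) (p : ℝ) (k : ℕ) {F : Type*} [NormedAddCommGroup F]
    [NormedSpace ℝ F] (f : E3 → F) : Prop :=
  ∀ j ≤ k, IntegrableOn (fun x => ‖iteratedFDeriv ℝ j f x‖ ^ p) Ω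

/-- A bounded simply connected smooth domain in `ℝ³` whose boundary has finitely many
two-dimensional connected components, together with its outward unit normal. -/
structure NiceDomain : Type where
  Ω : Set E3
  n : E3 → E3
  isOpen : IsOpen Ω
  nonempty : Ω.Nonempty
  bounded : Bornology.IsBounded Ω
  connected : IsConnected Ω
  simplyConnected : SimplyConnectedSpace ↥Ω
  unitNormal : ∀ x ∈ frontier Ω, ‖n x‖ = 1
  finiteBdryComponents :
    {C : Set E3 | ∃ x ∈ frontier Ω, C = connectedComponentIn (frontier Ω) x}.Finite

/-- The pressure law `P(ρ) = aρ^γ`. -/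
noncomputable def pres (a γ r : ℝ) : ℝ := a * r ^ γ

/-- Average density `ρ̄`. -/
noncomputable def rhoBar (Ω : Set E3) (ρ0 : E3 → ℝ) : ℝ :=
  (∫ x in Ω, ρ0 x) / (volume Ω).toReal

/-- `G(ρ) = ρ ∫_{ρ̄}^{ρ} (P(ξ)-P̄)/ξ² dξ`. -/
noncomputable def Gfun (a γ rbar r : ℝ) : ℝ :=
  r * ∫ ξ in rbar..r, (pres a γ ξ - pres a γ rbar) / ξ ^ 2

/-- Initial total energy `E₀`. -/
noncomputable def E0tot (Ω : Set E3) (a γ : ℝ) (ρ0 : E3 → ℝ) (u0 d0 : E3 → E3) : ℝ :=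
  ∫ x in Ω, ((1/2) * ρ0 x * ‖u0 x‖ ^ 2 + (1/2) * ‖fderiv ℝ d0 x‖ ^ 2
    + Gfun a γ (rhoBar Ω ρ0) (ρ0 x))

/-- `(ρ,u,d)` is a (strong) solution of the compressible nematic liquid crystal system on
`Ω` for times in `I`, with slip boundary condition for `u` and Neumann condition for `d`. -/
structure IsStrongSol (μ lam a γ : ℝ) (Ω : Set E3) (n : E3 → E3)
    (ρ : ℝ → E3 → ℝ) (u d : ℝ → E3 → E3) (I : Set ℝ) : Prop where
  reg_rho : ∀ t ∈ I, ContDiff ℝ 1 (ρ t)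
  reg_u : ∀ t ∈ I, ContDiff ℝ 2 (u t)
  reg_d : ∀ t ∈ I, ContDiff ℝ 3 (d t)
  reg_time : ∀ t ∈ I, ∀ x ∈ Ω, DifferentiableAt ℝ (fun s => ρ s x) t ∧
      DifferentiableAt ℝ (fun s => u s x) t ∧ DifferentiableAt ℝ (fun s => d s x) t
  mass : ∀ t ∈ I, ∀ x ∈ Ω,
    tD ρ t x + div3 (fun y => ρ t y • u t y) x = 0
  momentum : ∀ t ∈ I, ∀ x ∈ Ω,
    ρ t x • tD u t x + ρ t x • fderiv ℝ (u t) x (u t x)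
        + gradient (fun y => a * ρ t y ^ γ) x
      = μ • lap3 (u t) x + (μ + lam) • gradient (fun y => div3 (u t) y) x
        - lapDotGrad (d t) x
  direction : ∀ t ∈ I, ∀ x ∈ Ω,
    tD d t x + fderiv ℝ (d t) x (u t x) = lap3 (d t) x + gradSq (d t) x • d t x
  unit_sphere : ∀ t ∈ I, ∀ x ∈ Ω, ‖d t x‖ = 1
  bc_u : ∀ t ∈ I, ∀ x ∈ frontier Ω, ⟪u t x, n x⟫ = 0
  bc_curl : ∀ t ∈ I, ∀ x ∈ frontier Ω, cross3 (curl3 (u t) x) (n x) = 0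
  bc_d : ∀ t ∈ I, ∀ x ∈ frontier Ω, fderiv ℝ (d t) x (n x) = 0

/-- Initial condition `(ρ, ρu, d)(·,0) = (ρ₀, ρ₀u₀, d₀)`. -/
def InitCond (Ω : Set E3) (ρ0 : E3 → ℝ) (u0 d0 : E3 → E3)
    (ρ : ℝ → E3 → ℝ) (u d : ℝ → E3 → E3) : Prop :=
  ∀ x ∈ Ω, ρ 0 x = ρ0 x ∧ ρ0 x • u 0 x = ρ0 x • u0 x ∧ d 0 x = d0 x

/-- Hypotheses (1.10) on the initial data. -/
structure InitData (Ω : Set E3) (n : E3 → E3) (a γ q M1 M2 ρhat : ℝ)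
    (ρ0 : E3 → ℝ) (u0 d0 : E3 → E3) : Prop where
  hq : 3 < q ∧ q < 6
  hM1 : 0 < M1
  hM2 : 0 < M2
  rhohat_ge : rhoBar Ω ρ0 + 1 ≤ ρhat
  rho0_nonneg : ∀ x ∈ Ω, 0 ≤ ρ0 x
  rho0_le : ∀ x ∈ Ω, ρ0 x ≤ ρhat
  rho0_reg : ContDiff ℝ 1 ρ0
  rho0_W1q : MemWkp Ω q 1 ρ0
  P0_W1q : MemWkp Ω q 1 (fun x => a * ρ0 x ^ γ)
  u0_reg : ContDiff ℝ 1 u0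
  u0_H1 : MemWkp Ω 2 1 u0
  u0_bc : ∀ x ∈ frontier Ω, ⟪u0 x, n x⟫ = 0
  u0_bc_curl : ∀ x ∈ frontier Ω, cross3 (curl3 u0 x) (n x) = 0
  d0_reg : ContDiff ℝ 2 d0
  d0_H2 : MemWkp Ω 2 2 d0
  d0_bc : ∀ x ∈ frontier Ω, fderiv ℝ d0 x (n x) = 0
  gradu0_le : DkLpN Ω 2 1 u0 ^ 2 ≤ M1
  lapd0_le : LpN Ω 2 (lap3 d0) ^ 2 ≤ M2
  d0_unit : ∀ x ∈ Ω, ‖d0 x‖ = 1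

/-- `σ(t) = min{1,t}`. -/
noncomputable def sgm (t : ℝ) : ℝ := min 1 t

/-- `A₁(T)`. -/
noncomputable def A1 (Ω : Set E3) (u d : ℝ → E3 → E3) (T : ℝ) : ℝ :=
  ⨆ t ∈ Icc (0:ℝ) T, sgm t * (DkLpN Ω 2 1 (u t) ^ 2 + LpN Ω 2 (lap3 (d t)) ^ 2)

/-- `A₂(T)`. -/
noncomputable def A2 (Ω : Set E3) (u d : ℝ → E3 → E3) (T : ℝ) : ℝ :=
  ⨆ t ∈ Icc (0:ℝ) T, (DkLpN Ω 2 1 (u t) ^ 2 + LpN Ω 2 (lap3 (d t)) ^ 2)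

/-- The a priori assumptions (3.6). -/
def Apriori (Ω : Set E3) (ρ : ℝ → E3 → ℝ) (u d : ℝ → E3 → E3) (T ρhat K e0 : ℝ) : Prop :=
  (∀ t ∈ Icc (0:ℝ) T, ∀ x ∈ Ω, ρ t x ≤ 2 * ρhat) ∧
  A1 Ω u d T ≤ 2 * Real.sqrt e0 ∧
  A2 Ω u d (sgm T) ≤ 4 * K

/-- Effective viscous flux `F = (2μ+λ) div u − (P − P̄)`. -/
noncomputable def Fl (μ lam a γ Pbar : ℝ) (ρ : ℝ → E3 → ℝ) (u : ℝ → E3 → E3)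
    (t : ℝ) (x : E3) : ℝ :=
  (2 * μ + lam) * div3 (u t) x - (a * ρ t x ^ γ - Pbar)

/-- `M(d):∇u` where `M(d) = ∇d ⊙ ∇d − ½|∇d|² I₃`. -/
noncomputable def MdG (d u : E3 → E3) (x : E3) : ℝ :=
  ∑ i : Fin 3, ∑ j : Fin 3,
    (⟪pd d i x, pd d j x⟫ - (if i = j then gradSq d x / 2 else 0)) * pd u i x j

section Shorthands

/-- `‖∇u‖_{L^p}` at time `t`. -/
noncomputable def nGUp (Ω : Set E3) (p : ℝ) (u : ℝ → E3 → E3) (t : ℝ) : ℝ := DkLpN Ω p 1 (u t)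
/-- `‖∇u‖_{L²}` at time `t`. -/
noncomputable def nGU (Ω : Set E3) (u : ℝ → E3 → E3) (t : ℝ) : ℝ := DkLpN Ω 2 1 (u t)
/-- `‖∇^k d‖_{L²}` at time `t`. -/
noncomputable def nDk (Ω : Set E3) (k : ℕ) (d : ℝ → E3 → E3) (t : ℝ) : ℝ := DkLpN Ω 2 k (d t)
/-- `‖∇d‖_{H¹}` at time `t`. -/
noncomputable def nGDH1 (Ω : Set E3) (d : ℝ → E3 → E3) (t : ℝ) : ℝ := nDk Ω 1 d t + nDk Ω 2 d t
/-- `‖div u‖_{L²}` at time `t`. -/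
noncomputable def nDivU (Ω : Set E3) (u : ℝ → E3 → E3) (t : ℝ) : ℝ := LpN Ω 2 (div3 (u t))
/-- `‖curl u‖_{L²}` at time `t`. -/
noncomputable def nCurlU (Ω : Set E3) (u : ℝ → E3 → E3) (t : ℝ) : ℝ := LpN Ω 2 (curl3 (u t))
/-- `‖Δd‖_{L²}` at time `t`. -/
noncomputable def nLapD (Ω : Set E3) (d : ℝ → E3 → E3) (t : ℝ) : ℝ := LpN Ω 2 (lap3 (d t))
/-- `‖√ρ u̇‖_{L²}` at time `t`. -/
noncomputable def nSRU (Ω : Set E3) (ρ : ℝ → E3 → ℝ) (u : ℝ → E3 → E3) (t : ℝ) : ℝ :=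
  LpN Ω 2 (fun x => Real.sqrt (ρ t x) • matD u u t x)
/-- `‖ρ u̇‖_{L^p}` at time `t`. -/
noncomputable def nRUp (Ω : Set E3) (p : ℝ) (ρ : ℝ → E3 → ℝ) (u : ℝ → E3 → E3) (t : ℝ) : ℝ :=
  LpN Ω p (fun x => ρ t x • matD u u t x)
/-- `‖∇d_t‖_{L²}` at time `t`. -/
noncomputable def nGDt (Ω : Set E3) (d : ℝ → E3 → E3) (t : ℝ) : ℝ :=
  DkLpN Ω 2 1 (fun x => tD d t x)
/-- `‖d_t‖_{L²}` at time `t`. -/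
noncomputable def nDtL2 (Ω : Set E3) (d : ℝ → E3 → E3) (t : ℝ) : ℝ :=
  LpN Ω 2 (fun x => tD d t x)
/-- `‖d_{tt}‖_{L²}` at time `t`. -/
noncomputable def nDtt (Ω : Set E3) (d : ℝ → E3 → E3) (t : ℝ) : ℝ :=
  LpN Ω 2 (fun x => deriv (fun s => tD d s x) t)
/-- `‖∇u̇‖_{L²}` at time `t`. -/
noncomputable def nGUdot (Ω : Set E3) (u : ℝ → E3 → E3) (t : ℝ) : ℝ :=
  DkLpN Ω 2 1 (fun x => matD u u t x)
/-- `‖div u̇‖_{L²}` at time `t`. -/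
noncomputable def nDivUdot (Ω : Set E3) (u : ℝ → E3 → E3) (t : ℝ) : ℝ :=
  LpN Ω 2 (div3 (fun x => matD u u t x))
/-- `‖curl u̇‖_{L²}` at time `t`. -/
noncomputable def nCurlUdot (Ω : Set E3) (u : ℝ → E3 → E3) (t : ℝ) : ℝ :=
  LpN Ω 2 (curl3 (fun x => matD u u t x))
/-- `‖|∇d||∇²d|‖_{L^p}` at time `t`. -/
noncomputable def nDDp (Ω : Set E3) (p : ℝ) (d : ℝ → E3 → E3) (t : ℝ) : ℝ :=
  LpN Ω p (fun x => ‖fderiv ℝ (d t) x‖ * ‖iteratedFDeriv ℝ 2 (d t) x‖)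
/-- `‖P − P̄‖_{L^p}` at time `t`. -/
noncomputable def nPp (Ω : Set E3) (p a γ Pbar : ℝ) (ρ : ℝ → E3 → ℝ) (t : ℝ) : ℝ :=
  LpN Ω p (fun x => a * ρ t x ^ γ - Pbar)

end Shorthands

/-- Zlotnik's inequality. -/
theorem zlotnik_inequality (T : ℝ) (hT : 0 < T) (y b g : ℝ → ℝ)
    (y0 N0 N1 : ℝ) (hg : Continuous g)
    (hy0 : y 0 = y0)
    (hyd : ∀ t ∈ Icc (0:ℝ) T, HasDerivAt y (g (y t) + deriv b t) t)
    (hbd : ∀ t ∈ Icc (0:ℝ) T, DifferentiableAt ℝ b t)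
    (hyW : IntervalIntegrable (deriv y) volume 0 T)
    (hbW : IntervalIntegrable (deriv b) volume 0 T)
    (hginf : Tendsto g atTop atBot)
    (hN0 : 0 ≤ N0) (hN1 : 0 ≤ N1)
    (hb : ∀ t1 t2 : ℝ, 0 ≤ t1 → t1 < t2 → t2 ≤ T → b t2 - b t1 ≤ N0 + N1 * (t2 - t1))
    (ξ0 : ℝ) (hξ0 : ∀ ξ : ℝ, ξ0 ≤ ξ → g ξ ≤ -N1) :
    ∀ t ∈ Icc (0:ℝ) T, y t ≤ max y0 ξ0 + N0 := by
  set M := max y0 ξ0 with hM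
  by_contra hcon
  push_neg at hcon
  obtain ⟨t2, ht2I, ht2⟩ := hcon
  have hyM : y 0 ≤ M := by rw [hy0]; exact le_max_left _ _
  have hξM : ξ0 ≤ M := le_max_right _ _
  have hycont : ∀ t ∈ Icc (0:ℝ) T, ContinuousAt y t := fun t ht => (hyd t ht).continuousAt
  have ht2pos : 0 < t2 := by
    rcases ht2I.1.lt_or_eq with h | h
    · exact h
    · exfalso; rw [← h] at ht2; linarith
  -- the set S
  set S : Set ℝ := {s | s ∈ Icc 0 t2 ∧ y s ≤ M} with hS
  have h0S : (0:ℝ) ∈ S := ⟨⟨le_rfl, le_of_lt ht2pos⟩, hyM⟩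
  have hSne : S.Nonempty := ⟨0, h0S⟩
  have hSbdd : BddAbove S := ⟨t2, fun s hs => hs.1.2⟩
  set t1 := sSup S with ht1
  have ht1mem0 : (0:ℝ) ≤ t1 := le_csSup hSbdd h0S
  have ht1le : t1 ≤ t2 := csSup_le hSne fun s hs => hs.1.2
  have hsubT : Icc t1 t2 ⊆ Icc (0:ℝ) T :=
    fun s hs => ⟨le_trans ht1mem0 hs.1, le_trans hs.2 ht2I.2⟩
  -- S is closed
  have hSclosed : IsClosed S := by
    have hcOn : ContinuousOn y (Icc 0 t2) := fun s hs =>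
      (hycont s ⟨hs.1, le_trans hs.2 ht2I.2⟩).continuousWithinAt
    have : S = Icc 0 t2 ∩ y ⁻¹' Iic M := by
      ext s; simp [hS, Set.mem_inter_iff, and_comm]
    rw [this]
    exact ContinuousOn.preimage_isClosed_of_isClosed hcOn isClosed_Icc isClosed_Iic
  have ht1S : t1 ∈ S := hSclosed.csSup_mem hSne hSbdd
  have hyt1le : y t1 ≤ M := ht1S.2
  have ht1lt : t1 < t2 := by
    rcases lt_or_eq_of_le ht1le with h | h
    · exact h
    · exfalso; rw [h] at hyt1le; linarith
  -- y s > M for s ∈ (t1, t2]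
  have hgt : ∀ s ∈ Ioc t1 t2, M < y s := by
    intro s hs
    by_contra hle
    push_neg at hle
    have : s ∈ S := ⟨⟨le_trans ht1mem0 (le_of_lt hs.1), hs.2⟩, hle⟩
    exact absurd (le_csSup hSbdd this) (not_le.mpr hs.1)
  -- y t1 ≥ M by continuity from the right
  have hyt1ge : M ≤ y t1 := by
    have htend : Tendsto y (𝓝[>] t1) (𝓝 (y t1)) :=
      ((hycont t1 (hsubT ⟨le_rfl, ht1le⟩)).continuousWithinAt)
    refine ge_of_tendsto htend ?_
    filter_upwards [Ioc_mem_nhdsGT_of_mem ⟨le_rfl, ht1lt⟩] with s hs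
    exact le_of_lt (hgt s hs)
  have hyge : ∀ s ∈ Icc t1 t2, M ≤ y s := by
    intro s hs
    rcases eq_or_lt_of_le hs.1 with h | h
    · rw [← h]; exact hyt1ge
    · exact le_of_lt (hgt s ⟨h, hs.2⟩)
  -- integrability
  have hgyc : ContinuousOn (fun s => g (y s)) (Icc t1 t2) := by
    exact hg.comp_continuousOn (fun s hs => (hycont s (hsubT hs)).continuousWithinAt)
  have hgyi : IntervalIntegrable (fun s => g (y s)) volume t1 t2 := by
    apply ContinuousOn.intervalIntegrable
    rwa [uIcc_of_le ht1le]
  have hbi : IntervalIntegrable (deriv b) volume t1 t2 := by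
    apply hbW.mono_set
    rw [uIcc_of_le ht1le, uIcc_of_le (le_of_lt hT)]
    exact hsubT
  -- FTC for y
  have hftc_y : ∫ s in t1..t2, (g (y s) + deriv b s) = y t2 - y t1 := by
    apply intervalIntegral.integral_eq_sub_of_hasDerivAt
    · intro s hs
      rw [uIcc_of_le ht1le] at hs
      exact hyd s (hsubT hs)
    · exact hgyi.add hbi
  -- FTC for b
  have hftc_b : ∫ s in t1..t2, deriv b s = b t2 - b t1 := by
    apply intervalIntegral.integral_eq_sub_of_hasDerivAt
    · intro s hs
      rw [uIcc_of_le ht1le] at hs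
      exact (hbd s (hsubT hs)).hasDerivAt
    · exact hbi
  -- bound on ∫ g(y)
  have hgy_bound : ∫ s in t1..t2, g (y s) ≤ ∫ s in t1..t2, (-N1 : ℝ) := by
    apply intervalIntegral.integral_mono_on ht1le hgyi (intervalIntegrable_const)
    intro s hs
    exact hξ0 (y s) (le_trans hξM (hyge s hs))
  have hconst : ∫ s in t1..t2, (-N1 : ℝ) = -N1 * (t2 - t1) := by
    simp [intervalIntegral.integral_const]; ring
  have hbb : b t2 - b t1 ≤ N0 + N1 * (t2 - t1) := hb t1 t2 ht1mem0 ht1lt ht2I.2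
  have hsplit : ∫ s in t1..t2, (g (y s) + deriv b s)
      = (∫ s in t1..t2, g (y s)) + ∫ s in t1..t2, deriv b s :=
    intervalIntegral.integral_add hgyi hbi
  have : y t2 - y t1 ≤ N0 := by
    rw [← hftc_y, hsplit, hftc_b]
    calc (∫ s in t1..t2, g (y s)) + (b t2 - b t1)
        ≤ (-N1 * (t2 - t1)) + (N0 + N1 * (t2 - t1)) := by
          apply add_le_add _ hbb
          rw [← hconst]; exact hgy_bound
      _ = N0 := by ring
  linarith
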